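/- Let u be a smooth velocity field on S with normal component u_N = u·n equal to w_N, and write u = u_T + w_N n with u_T tangential. Then the tangential part of the material acceleration satisfies the identity P u̇ = P∂°u_T + (∇_Γ u_T)u_T + w_N H u_T − ½∇_Γ(w_N²) on S. -/

import Mathlib

/-!
Common framework: tangential differential calculus on an evolving closed surface
`Γ(t) ⊂ ℝ³` transported by a smooth ambient velocity field `w`, together with the
evolving function spaces of Olshanskii–Reusken–Zhiliakov,
"Tangential Navier-Stokes equations on evolving surfaces".
-/

noncomputable section

open MeasureTheory Set Matrix Function
open scoped RealInnerProductSpace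

abbrev E3 : Type := EuclideanSpace ℝ (Fin 3)
abbrev Mat3 : Type := Matrix (Fin 3) (Fin 3) ℝ

/-- Apply a 3×3 matrix to a vector of `E3`. -/
def matApply (A : Mat3) (v : E3) : E3 :=
  (EuclideanSpace.equiv (Fin 3) ℝ).symm (A.mulVec ((EuclideanSpace.equiv (Fin 3) ℝ) v))

/-- Outer product `a bᵀ` of two vectors. -/
def outerProd (a b : E3) : Mat3 := fun i j => a i * b j

/-- Jacobian matrix of an ambient vector field: `(jacMat u x) i j = ∂ⱼ uᵢ(x)`. -/
def jacMat (u : E3 → E3) (x : E3) : Mat3 :=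
  fun i j => (fderiv ℝ u x (EuclideanSpace.single j 1)) i

/-- Orthogonal projector `I - m mᵀ`. -/
def projMat (m : E3) : Mat3 := 1 - outerProd m m

/-- Squared Frobenius norm of a matrix. -/
def frobSq (A : Mat3) : ℝ := ∑ i, ∑ j, (A i j) ^ 2

/-- Frobenius inner product of two matrices. -/
def frobInner (A B : Mat3) : ℝ := ∑ i, ∑ j, A i j * B i j

/-- Entrywise time derivative of a matrix-valued curve. -/
def matDeriv (F : ℝ → Mat3) (t : ℝ) : Mat3 := fun i j => deriv (fun s => F s i j) t

/-- The geometric setting: a closed `C³` initial surface `Γ₀` (zero level set of `φ₀`),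
a bounded `C³` ambient velocity field `w` with flow map `flow`, the evolving surface
`Γ(t) = flow(t)(Γ₀)` described by a space–time `C³` level-set function `φ`,
final time `T > 0` and viscosity `visc > 0`. -/
structure Setting where
  /-- final time -/
  T : ℝ
  T_pos : 0 < T
  /-- viscosity μ -/
  visc : ℝ
  visc_pos : 0 < visc
  /-- level-set function of the initial surface Γ₀ -/
  φ₀ : E3 → ℝ
  φ₀_smooth : ContDiff ℝ 3 φ₀
  Γ₀_compact : IsCompact {x : E3 | φ₀ x = 0}
  Γ₀_connected : IsConnected {x : E3 | φ₀ x = 0}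
  /-- ambient velocity field -/
  w : ℝ → E3 → E3
  w_smooth : ContDiff ℝ 3 (fun p : ℝ × E3 => w p.1 p.2)
  w_bdd : ∃ M : ℝ, ∀ t x, ‖w t x‖ ≤ M
  /-- flow map of `w` -/
  flow : ℝ → E3 → E3
  flow_init : ∀ x, flow 0 x = x
  flow_ode : ∀ x t, HasDerivAt (fun s => flow s x) (w t (flow t x)) t
  /-- space–time level-set function for the evolving surface -/
  φ : ℝ → E3 → ℝ
  φ_smooth : ContDiff ℝ 3 (fun p : ℝ × E3 => φ p.1 p.2)
  φ_init : φ 0 = φ₀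
  φ_levelset : ∀ t ∈ Icc (0:ℝ) T, ∀ x : E3,
      x ∈ flow t '' {y : E3 | φ₀ y = 0} ↔ φ t x = 0
  φ_grad_ne : ∀ t ∈ Icc (0:ℝ) T, ∀ x : E3, φ t x = 0 → gradient (φ t) x ≠ 0

namespace Setting

variable (S : Setting)

/-- The evolving surface `Γ(t)`. -/
def Γ (t : ℝ) : Set E3 := S.flow t '' {y : E3 | S.φ₀ y = 0}

/-- Outward unit normal (via the level-set function). -/
def nor (t : ℝ) (x : E3) : E3 := ‖gradient (S.φ t) x‖⁻¹ • gradient (S.φ t) x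

/-- Tangential projector `P = I - n nᵀ`. -/
def P (t : ℝ) (x : E3) : Mat3 := projMat (S.nor t x)

/-- Scalar normal velocity `w_N = w·n`. -/
def wN (t : ℝ) (x : E3) : ℝ := ⟪S.w t x, S.nor t x⟫

/-- `D_Γ u = (∇u)P`. -/
def DΓ (t : ℝ) (u : E3 → E3) (x : E3) : Mat3 := jacMat u x * S.P t x

/-- Covariant gradient `∇_Γ u = P (∇u) P`. -/
def covGrad (t : ℝ) (u : E3 → E3) (x : E3) : Mat3 := S.P t x * jacMat u x * S.P t x

/-- Surface rate-of-strain tensor `E_s(u) = ½(∇_Γ u + (∇_Γ u)ᵀ)`. -/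
def Es (t : ℝ) (u : E3 → E3) (x : E3) : Mat3 :=
  (2:ℝ)⁻¹ • (S.covGrad t u x + (S.covGrad t u x)ᵀ)

/-- Surface divergence `div_Γ u = tr (∇_Γ u)`. -/
def divΓ (t : ℝ) (u : E3 → E3) (x : E3) : ℝ := (S.covGrad t u x).trace

/-- Surface gradient of a scalar field, `∇_Γ p = P ∇p`. -/
def sgrad (t : ℝ) (p : E3 → ℝ) (x : E3) : E3 := matApply (S.P t x) (gradient p x)

/-- Weingarten map `H = ∇_Γ n`. -/
def Wein (t : ℝ) (x : E3) : Mat3 := S.covGrad t (S.nor t) x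

/-- Twice the mean curvature, `κ = tr H`. -/
def curv (t : ℝ) (x : E3) : ℝ := (S.Wein t x).trace

/- `L²(Γ(t))` and `H¹(Γ(t))` inner products and norms. -/

def inner0 (t : ℝ) (u v : E3 → E3) : ℝ := ∫ x in S.Γ t, ⟪u x, v x⟫ ∂μH[2]

def nsq0 (t : ℝ) (u : E3 → E3) : ℝ := ∫ x in S.Γ t, ‖u x‖ ^ 2 ∂μH[2]

/-- `‖·‖_{0,t}`, the `L²(Γ(t))` norm. -/
def norm0 (t : ℝ) (u : E3 → E3) : ℝ := Real.sqrt (S.nsq0 t u)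

def nsq1 (t : ℝ) (u : E3 → E3) : ℝ :=
  S.nsq0 t u + ∫ x in S.Γ t, frobSq (S.DΓ t u x) ∂μH[2]

/-- `‖·‖_{1,t}`, the `H¹(Γ(t))` norm: `‖v‖² = ‖v‖₀² + ‖D_Γ v‖₀²`. -/
def norm1 (t : ℝ) (u : E3 → E3) : ℝ := Real.sqrt (S.nsq1 t u)

/-- `L²(Γ(t))` norm of a scalar field. -/
def norm0Sc (t : ℝ) (p : E3 → ℝ) : ℝ := Real.sqrt (∫ x in S.Γ t, (p x) ^ 2 ∂μH[2])

/-- `‖E_s(u)‖_{0,t}`. -/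
def normEs (t : ℝ) (u : E3 → E3) : ℝ :=
  Real.sqrt (∫ x in S.Γ t, frobSq (S.Es t u x) ∂μH[2])

/-- Membership in `H¹(t)`: tangential `H¹(Γ(t))³` fields (represented by ambient
fields differentiable at points of `Γ(t)`). -/
def MemH1 (t : ℝ) (u : E3 → E3) : Prop :=
  (∀ x ∈ S.Γ t, DifferentiableAt ℝ u x) ∧
  (∀ x ∈ S.Γ t, ⟪u x, S.nor t x⟫ = 0) ∧
  AEStronglyMeasurable u (μH[2].restrict (S.Γ t)) ∧
  IntegrableOn (fun x => ‖u x‖ ^ 2) (S.Γ t) μH[2] ∧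
  IntegrableOn (fun x => frobSq (S.DΓ t u x)) (S.Γ t) μH[2]

/-- Membership in `V₁(t)`: divergence-free tangential `H¹` fields. -/
def MemV1 (t : ℝ) (u : E3 → E3) : Prop :=
  S.MemH1 t u ∧ ∀ x ∈ S.Γ t, S.divΓ t u x = 0

/-- `𝒱(t)`: `C¹` solenoidal tangential fields on `Γ(t)`. -/
def SmoothSol (t : ℝ) : Set (E3 → E3) :=
  {v | ContDiff ℝ 1 v ∧ ∀ x ∈ S.Γ t, ⟪v x, S.nor t x⟫ = 0 ∧ S.divΓ t v x = 0}

/-- Membership in `V₀(t)`: the `L²(Γ(t))`-closure of `𝒱(t)`. -/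
def MemV0 (t : ℝ) (u : E3 → E3) : Prop :=
  AEStronglyMeasurable u (μH[2].restrict (S.Γ t)) ∧
  IntegrableOn (fun x => ‖u x‖ ^ 2) (S.Γ t) μH[2] ∧
  ∀ ε > 0, ∃ v ∈ S.SmoothSol t, S.norm0 t (fun x => u x - v x) < ε

/- Evolving Bochner-type spaces of space–time fields. -/

/-- `L²_{H¹}`. -/
def MemL2H1 (v : ℝ → E3 → E3) : Prop :=
  Measurable (fun p : ℝ × E3 => v p.1 p.2) ∧
  (∀ t ∈ Icc (0:ℝ) S.T, S.MemH1 t (v t)) ∧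
  IntegrableOn (fun t => S.nsq1 t (v t)) (Icc (0:ℝ) S.T) volume

/-- `L²_{V₁}`. -/
def MemL2V1 (v : ℝ → E3 → E3) : Prop :=
  S.MemL2H1 v ∧ ∀ t ∈ Icc (0:ℝ) S.T, ∀ x ∈ S.Γ t, S.divΓ t (v t) x = 0

def nsqBold0 (v : ℝ → E3 → E3) : ℝ := ∫ t in Icc (0:ℝ) S.T, S.nsq0 t (v t)

/-- `‖·‖₀`, the `L²` norm over the space–time manifold `𝒮`. -/
def normBold0 (v : ℝ → E3 → E3) : ℝ := Real.sqrt (S.nsqBold0 v)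

def nsqBold1 (v : ℝ → E3 → E3) : ℝ := ∫ t in Icc (0:ℝ) S.T, S.nsq1 t (v t)

/-- `‖·‖₁`, the `L²_{H¹}` norm. -/
def normBold1 (v : ℝ → E3 → E3) : ℝ := Real.sqrt (S.nsqBold1 v)

/-- `(·,·)₀ = ∫₀ᵀ (·,·)_{0,t} dt`. -/
def innerBold0 (u v : ℝ → E3 → E3) : ℝ := ∫ t in Icc (0:ℝ) S.T, S.inner0 t (u t) (v t)

/-- Normal time derivative `∂°ξ = ∂ₜξ + (w_N n·∇)ξ` (strong form, for smooth fields). -/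
def ndt (ξ : ℝ → E3 → E3) (t : ℝ) (x : E3) : E3 :=
  deriv (fun s => ξ s x) t + matApply (jacMat (ξ t) x) (S.wN t x • S.nor t x)

/-- The test space `𝒟₀`: smooth solenoidal tangential space–time fields, compactly
supported in `(0,T)`. -/
def TestD0 : Set (ℝ → E3 → E3) :=
  {ξ | ContDiff ℝ (⊤ : ℕ∞) (fun p : ℝ × E3 => ξ p.1 p.2) ∧
       (∀ t ∈ Icc (0:ℝ) S.T, ∀ x ∈ S.Γ t,
          ⟪ξ t x, S.nor t x⟫ = 0 ∧ S.divΓ t (ξ t) x = 0) ∧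
       ∃ ε > 0, ∀ t : ℝ, t ≤ ε ∨ S.T - ε ≤ t → ξ t = fun _ => 0}

/-- The test space `𝒟̂₀`: smooth tangential (not necessarily solenoidal) fields,
compactly supported in `(0,T)`. -/
def TestD0hat : Set (ℝ → E3 → E3) :=
  {ξ | ContDiff ℝ (⊤ : ℕ∞) (fun p : ℝ × E3 => ξ p.1 p.2) ∧
       (∀ t ∈ Icc (0:ℝ) S.T, ∀ x ∈ S.Γ t, ⟪ξ t x, S.nor t x⟫ = 0) ∧
       ∃ ε > 0, ∀ t : ℝ, t ≤ ε ∨ S.T - ε ≤ t → ξ t = fun _ => 0}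

/-- The duality pairing defining the weak normal time derivative `∂°v`:
`⟨∂°v, ξ⟩ = −∫₀ᵀ∫_{Γ(t)} (v·∂°ξ + (v·ξ) w_N κ)`. -/
def pairing (v ξ : ℝ → E3 → E3) : ℝ :=
  - ∫ t in Icc (0:ℝ) S.T,
      ∫ x in S.Γ t,
        (⟪v t x, S.ndt ξ t x⟫ + ⟪v t x, ξ t x⟫ * S.wN t x * S.curv t x) ∂μH[2]

/-- `M` is a bound for `∂°v` as a functional on `L²_{V₁}` (tested on the dense set `𝒟₀`). -/
def DualBound (v : ℝ → E3 → E3) (M : ℝ) : Prop :=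
  ∀ ξ ∈ S.TestD0, |S.pairing v ξ| ≤ M * S.normBold1 ξ

/-- `M` is a bound for `∂°v` as a functional on `L²_{H¹}` (tested on the dense set `𝒟̂₀`). -/
def DualBoundHat (v : ℝ → E3 → E3) (M : ℝ) : Prop :=
  ∀ ξ ∈ S.TestD0hat, |S.pairing v ξ| ≤ M * S.normBold1 ξ

/-- The solution space `W(V₁,V₁') = {v ∈ L²_{V₁} : ∂°v ∈ L²_{V₁'}}`. -/
def MemW (v : ℝ → E3 → E3) : Prop := S.MemL2V1 v ∧ ∃ M : ℝ, S.DualBound v M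

/-- The space `W(H¹,H⁻¹) = {v ∈ L²_{H¹} : ∂°v ∈ L²_{H⁻¹}}`. -/
def MemWH (v : ℝ → E3 → E3) : Prop := S.MemL2H1 v ∧ ∃ M : ℝ, S.DualBoundHat v M

/-- `‖∂°v‖_{L²_{V₁'}}`, the dual norm of the weak normal time derivative. -/
def dualNorm (v : ℝ → E3 → E3) : ℝ := sInf {M : ℝ | 0 ≤ M ∧ S.DualBound v M}

/-- The `W(V₁,V₁')` norm, `‖v‖_W² = ‖v‖₁² + ‖∂°v‖²_{L²_{V₁'}}`. -/
def normW (v : ℝ → E3 → E3) : ℝ := Real.sqrt (S.nsqBold1 v + (S.dualNorm v) ^ 2)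

/-- `a(u,v) = 2μ (E_s(u), E_s(v))₀`. -/
def aForm (u v : ℝ → E3 → E3) : ℝ :=
  2 * S.visc * ∫ t in Icc (0:ℝ) S.T,
      ∫ x in S.Γ t, frobInner (S.Es t (u t) x) (S.Es t (v t) x) ∂μH[2]

/-- `c(u,u',v) = ((∇_Γ u) u', v)₀`. -/
def cForm (u u' v : ℝ → E3 → E3) : ℝ :=
  ∫ t in Icc (0:ℝ) S.T,
    ∫ x in S.Γ t, ⟪matApply (S.covGrad t (u t) x) (u' t x), v t x⟫ ∂μH[2]

/-- `ℓ(u,v) = (w_N H u, v)₀`. -/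
def ellForm (u v : ℝ → E3 → E3) : ℝ :=
  ∫ t in Icc (0:ℝ) S.T,
    ∫ x in S.Γ t, S.wN t x * ⟪matApply (S.Wein t x) (u t x), v t x⟫ ∂μH[2]

/-- Tangential fields in `L²(𝒮)³` (`f = Pf`). -/
def MemL2Tan (f : ℝ → E3 → E3) : Prop :=
  Measurable (fun p : ℝ × E3 => f p.1 p.2) ∧
  (∀ t ∈ Icc (0:ℝ) S.T, ∀ x ∈ S.Γ t, ⟪f t x, S.nor t x⟫ = 0) ∧
  (∀ t ∈ Icc (0:ℝ) S.T, IntegrableOn (fun x => ‖f t x‖ ^ 2) (S.Γ t) μH[2]) ∧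
  IntegrableOn (fun t => S.nsq0 t (f t)) (Icc (0:ℝ) S.T) volume

/-- The weak formulation (`NSvar`) of the tangential surface Navier–Stokes equations:
`u ∈ W(V₁,V₁')`, `u(0) = u₀`, and
`⟨∂°u,v⟩ + a(u,v) + c(u,u,v) + ℓ(u,v) = (f,v)₀` for all (test) fields `v`. -/
def IsWeakSolution (f : ℝ → E3 → E3) (u₀ : E3 → E3) (u : ℝ → E3 → E3) : Prop :=
  S.MemW u ∧ (∀ x ∈ S.Γ 0, u 0 x = u₀ x) ∧
  ∀ v ∈ S.TestD0,
    S.pairing u v + S.aForm u v + S.cForm u u v + S.ellForm u v = S.innerBold0 f v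

end Setting

/-! ### Auxiliary lemmas for Statement 17 -/

lemma inner_eq_sum' (a b : E3) : ⟪a,b⟫ = ∑ i, a i * b i := by
  simp [PiLp.inner_apply, RCLike.inner_apply]
  exact Finset.sum_congr rfl fun _ _ => mul_comm _ _

lemma sum_single' (v : E3) : ∑ j, v j • EuclideanSpace.single j (1:ℝ) = v := by
  refine PiLp.ext fun i => ?_
  fin_cases i <;> simp [Fin.sum_univ_three, EuclideanSpace.single_apply]

lemma matApply_apply' (A : Mat3) (v : E3) (i : Fin 3) :
    matApply A v i = ∑ j, A i j * v j := by
  simp [matApply, Matrix.mulVec, dotProduct]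

lemma matApply_jac (f : E3 → E3) (x v : E3) :
    matApply (jacMat f x) v = fderiv ℝ f x v := by
  refine PiLp.ext fun i => ?_
  rw [matApply_apply']
  have h : v = ∑ j, v j • EuclideanSpace.single j (1:ℝ) := (sum_single' v).symm
  conv_rhs => rw [h]
  rw [map_sum]
  rw [WithLp.ofLp_sum, Finset.sum_apply]
  simp [jacMat, PiLp.smul_apply, smul_eq_mul, mul_comm]

lemma matApply_mul (A B : Mat3) (v : E3) :
    matApply (A * B) v = matApply A (matApply B v) := by
  simp [matApply, Matrix.mulVec_mulVec]
  rw [← Matrix.mulVec_mulVec]; rfl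

lemma matApply_proj (m v : E3) :
    matApply (projMat m) v = v - ⟪m,v⟫ • m := by
  refine PiLp.ext fun i => ?_
  rw [matApply_apply']
  simp only [projMat, Matrix.sub_apply, sub_mul, Finset.sum_sub_distrib, outerProd]
  congr 1
  · simp [Matrix.one_apply, Finset.sum_ite_eq]
  · rw [inner_eq_sum']
    simp [Finset.mul_sum, Finset.sum_mul, mul_comm, mul_left_comm]
    exact Finset.sum_congr rfl fun _ _ => mul_assoc _ _ _

lemma gradient_inner' (f : E3 → ℝ) (x v : E3) : ⟪gradient f x, v⟫ = fderiv ℝ f x v := by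
  rw [gradient]; exact InnerProductSpace.toDual_symm_apply

open Filter Topology in
lemma fderiv_vanish_on_levelset {f h : E3 → ℝ} {x : E3}
    (hf : ContDiffAt ℝ 1 f x) (hf0 : f x = 0)
    (hgrad : fderiv ℝ f x ≠ 0)
    (hh : DifferentiableAt ℝ h x)
    (hvan : ∀ y, f y = 0 → h y = 0) :
    ∀ v, fderiv ℝ f x v = 0 → fderiv ℝ h x v = 0 := by
  set f' := fderiv ℝ f x with hf'def
  have hs : HasStrictFDerivAt f f' x := hf.hasStrictFDerivAt one_ne_zero
  have hsurj : f'.range = ⊤ := by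
    obtain ⟨v, hv⟩ : ∃ v, f' v ≠ 0 := by
      by_contra h'; push_neg at h'
      exact hgrad (ContinuousLinearMap.ext h')
    rw [LinearMap.range_eq_top]
    intro r
    exact ⟨(r / f' v) • v, by
      simp only [ContinuousLinearMap.coe_coe, map_smul, smul_eq_mul]; field_simp⟩
  set γ : f'.ker → E3 := hs.implicitFunction f f' hsurj (f x) with hγdef
  have hmap := hs.map_implicitFunction_eq hsurj
  have htend : Tendsto (fun z : f'.ker => ((f x : ℝ), z)) (𝓝 0) (𝓝 (f x, 0)) := by
    rw [nhds_prod_eq]; exact tendsto_const_nhds.prodMk tendsto_id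
  have hγvan : ∀ᶠ z : f'.ker in 𝓝 0, h (γ z) = 0 := by
    filter_upwards [htend.eventually hmap] with z hz
    exact hvan _ (by rw [← hf0]; exact hz)
  have hsd : HasStrictFDerivAt γ (f'.ker).subtypeL 0 := hs.to_implicitFunction hsurj
  have hγ0 : γ 0 = x := hs.implicitFunction_apply_image hsurj
  have hcomp : HasFDerivAt (h ∘ γ) ((fderiv ℝ h x).comp (f'.ker).subtypeL) 0 := by
    refine HasFDerivAt.comp (0 : f'.ker) ?_ hsd.hasFDerivAt
    rw [hγ0]; exact hh.hasFDerivAt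
  have hzero : HasFDerivAt (h ∘ γ) (0 : f'.ker →L[ℝ] ℝ) 0 := by
    refine (hasFDerivAt_const (0:ℝ) (0 : f'.ker)).congr_of_eventuallyEq ?_
    filter_upwards [hγvan] with z hz
    simp [Function.comp, hz]
  have heq := hcomp.unique hzero
  intro v hv
  have : ((fderiv ℝ h x).comp (f'.ker).subtypeL) ⟨v, hv⟩ = 0 := by rw [heq]; rfl
  simpa using this


/-!
**Statement 17 (identity (eq4) for the tangential material acceleration).**
-/

/-- Material derivative along the velocity field `u`: `v̇ = ∂ₜ v + (u·∇)v`. -/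
def materialDeriv (u v : ℝ → E3 → E3) (t : ℝ) (x : E3) : E3 :=
  deriv (fun s => v s x) t + matApply (jacMat (v t) x) (u t x)

set_option maxHeartbeats 2000000 in
/-- Let `u` be a smooth velocity field on `𝒮` whose normal component equals `w_N`, and
write `u = u_T + w_N n` with `u_T = P u` tangential.  Then the tangential part of the
material acceleration satisfies
`P u̇ = P ∂°u_T + (∇_Γ u_T) u_T + w_N H u_T − ½ ∇_Γ(w_N²)` on `𝒮`. -/
theorem tangential_material_acceleration (S : Setting)
    (u : ℝ → E3 → E3)
    (hu_smooth : ContDiff ℝ (⊤ : ℕ∞) (fun p : ℝ × E3 => u p.1 p.2))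
    (hu_normal : ∀ t ∈ Icc (0:ℝ) S.T, ∀ x ∈ S.Γ t, ⟪u t x, S.nor t x⟫ = S.wN t x) :
    letI uT : ℝ → E3 → E3 := fun t x => matApply (S.P t x) (u t x)
    ∀ t ∈ Icc (0:ℝ) S.T, ∀ x ∈ S.Γ t,
      matApply (S.P t x) (materialDeriv u u t x)
        = matApply (S.P t x) (S.ndt uT t x)
          + matApply (S.covGrad t (uT t) x) (uT t x)
          + S.wN t x • matApply (S.Wein t x) (uT t x)
          - (2:ℝ)⁻¹ • S.sgrad t (fun y => (S.wN t y) ^ 2) x := by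
  intro t ht x hx
  classical
  -- ## Joint functions and their derivatives
  set φJ : ℝ × E3 → ℝ := fun p => S.φ p.1 p.2 with hφJdef
  have hφJ : ContDiff ℝ 3 φJ := S.φ_smooth
  have hφJd : Differentiable ℝ φJ := hφJ.differentiable (by norm_num)
  set F' : ℝ × E3 → ((ℝ × E3) →L[ℝ] ℝ) := fderiv ℝ φJ with hF'def
  have hF'1 : ContDiff ℝ 2 F' := hφJ.fderiv_right (by norm_num)
  have hF'd : Differentiable ℝ F' := hF'1.differentiable (by norm_num)
  set inr3 : E3 →L[ℝ] ℝ × E3 := ContinuousLinearMap.inr ℝ ℝ E3 with hinr3def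
  set G : ℝ × E3 → E3 := fun p =>
    (InnerProductSpace.toDual ℝ E3).symm ((F' p).comp inr3) with hGdef
  have hGsmooth : ContDiff ℝ 2 G := by
    have h1 : ContDiff ℝ 2 (fun p => (F' p).comp inr3) := hF'1.clm_comp contDiff_const
    exact ContDiff.comp ((InnerProductSpace.toDual ℝ E3).symm.contDiff (n := 2)) h1
  have hGd : Differentiable ℝ G := hGsmooth.differentiable two_ne_zero
  have hGinner : ∀ (p : ℝ × E3) (z : E3), ⟪G p, z⟫ = F' p ((0:ℝ), z) := by
    intro p z
    rw [hGdef]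
    exact InnerProductSpace.toDual_symm_apply
  have hinr : ∀ (s : ℝ) (y : E3),
      HasFDerivAt (fun z : E3 => ((s, z) : ℝ × E3)) inr3 y := by
    intro s y
    have h1 := (hasFDerivAt_const (𝕜 := ℝ) s y).prodMk (hasFDerivAt_id (𝕜 := ℝ) y)
    exact h1
  have hφs : ∀ (s : ℝ) (y : E3),
      HasFDerivAt (S.φ s) ((F' (s, y)).comp inr3) y := by
    intro s y
    exact ((hφJd (s, y)).hasFDerivAt).comp y (hinr s y)
  have hGrad : ∀ (s : ℝ) (y : E3), gradient (S.φ s) y = G (s, y) := by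
    intro s y
    rw [gradient, (hφs s y).fderiv]
  -- second derivative data
  set F'' : (ℝ × E3) →L[ℝ] ((ℝ × E3) →L[ℝ] ℝ) := fderiv ℝ F' (t, x) with hF''def
  have hsym : ∀ p q : ℝ × E3, F'' p q = F'' q p := fun p q =>
    second_derivative_symmetric (fun y => (hφJd y).hasFDerivAt) (hF'd (t, x)).hasFDerivAt p q
  set DG : (ℝ × E3) →L[ℝ] E3 := fderiv ℝ G (t, x) with hDGdef
  have hDGinner : ∀ (q : ℝ × E3) (z : E3), ⟪DG q, z⟫ = F'' q ((0:ℝ), z) := by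
    intro q z
    have h1 : HasFDerivAt (fun p => ⟪G p, z⟫)
        (((innerSL ℝ (E := E3)).flip z).comp DG) (t, x) :=
      (((innerSL ℝ (E := E3)).flip z).hasFDerivAt).comp (t, x) (hGd (t, x)).hasFDerivAt
    have h2 : HasFDerivAt (fun p => F' p ((0:ℝ), z))
        ((ContinuousLinearMap.apply ℝ ℝ ((0:ℝ), z)).comp F'') (t, x) :=
      ((ContinuousLinearMap.apply ℝ ℝ (((0:ℝ), z) : ℝ × E3)).hasFDerivAt).comp (t, x)
        (hF'd (t, x)).hasFDerivAt
    have heqf : (fun p => ⟪G p, z⟫) = fun p => F' p ((0:ℝ), z) := funext fun p => hGinner p z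
    rw [heqf] at h1
    have h3 := h1.unique h2
    have h4 := ContinuousLinearMap.ext_iff.mp h3 q
    simp only [ContinuousLinearMap.comp_apply, ContinuousLinearMap.flip_apply,
      innerSL_apply_apply, ContinuousLinearMap.apply_apply] at h4
    rw [← h4]
  set Hg : E3 →L[ℝ] E3 := DG.comp inr3 with hHgdef
  have hGt : HasFDerivAt (fun y => G (t, y)) Hg x := (hGd (t, x)).hasFDerivAt.comp x (hinr t x)
  set gdot : E3 := DG ((1:ℝ), (0:E3)) with hgdotdef
  have hGs : HasDerivAt (fun s => G (s, x)) gdot t := by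
    have h1 : HasDerivAt (fun s => ((s, x) : ℝ × E3)) (((1:ℝ), (0:E3)) : ℝ × E3) t :=
      (hasDerivAt_id t).prodMk (hasDerivAt_const t x)
    exact (hGd (t, x)).hasFDerivAt.comp_hasDerivAt t h1
  have hHginner : ∀ v z : E3, ⟪Hg v, z⟫ = F'' ((0:ℝ), v) ((0:ℝ), z) := by
    intro v z
    have h1 : Hg v = DG ((0:ℝ), v) := by simp [hHgdef, hinr3def]
    rw [h1]; exact hDGinner _ z
  have hHgsym : ∀ v z : E3, ⟪Hg v, z⟫ = ⟪Hg z, v⟫ := by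
    intro v z
    rw [hHginner v z, hHginner z v, hsym]
  have hgdotinner : ∀ z : E3, ⟪gdot, z⟫ = F'' ((1:ℝ),(0:E3)) ((0:ℝ), z) := fun z =>
    hDGinner _ z
  -- ## Point data
  have hφ0 : S.φ t x = 0 := (S.φ_levelset t ht x).mp hx
  set g0 : E3 := G (t, x) with hg0def
  have hg0ne : g0 ≠ 0 := by
    rw [hg0def, ← hGrad t x]; exact S.φ_grad_ne t ht x hφ0
  set ρJ : ℝ × E3 → ℝ := fun p => ‖G p‖⁻¹ with hρJdef
  have hnorJ : ∀ (s : ℝ) (y : E3), S.nor s y = ρJ (s, y) • G (s, y) := by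
    intro s y; rw [Setting.nor, hGrad s y]
  set ρ0 : ℝ := ρJ (t, x) with hρ0def
  have hρ0eq : ρ0 = ‖g0‖⁻¹ := rfl
  have hρ0ne : ρ0 ≠ 0 := by
    rw [hρ0eq]; exact inv_ne_zero (norm_ne_zero_iff.mpr hg0ne)
  set n : E3 := S.nor t x with hndef
  have hn : n = ρ0 • g0 := by rw [hndef, hnorJ]
  have hng : ⟪g0, g0⟫ = (‖g0‖ : ℝ) * ‖g0‖ := real_inner_self_eq_norm_mul_norm g0
  have hnn : ⟪n, n⟫ = (1:ℝ) := by
    rw [hn, real_inner_smul_left, real_inner_smul_right, hng, hρ0eq]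
    have : ‖g0‖ ≠ 0 := norm_ne_zero_iff.mpr hg0ne
    field_simp
  have hρg : ρ0 * ρ0 * ⟪g0, g0⟫ = 1 := by
    rw [hng, hρ0eq]
    have : ‖g0‖ ≠ 0 := norm_ne_zero_iff.mpr hg0ne
    field_simp
  -- ## Derivatives of the normalization factor
  have hρJc : ContDiffAt ℝ 1 ρJ (t, x) := by
    have h1 : ContDiffAt ℝ 1 (fun p => ‖G p‖) (t, x) :=
      (hGsmooth.contDiffAt.of_le one_le_two).norm ℝ hg0ne
    exact h1.inv (norm_ne_zero_iff.mpr hg0ne)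
  have hρt : HasFDerivAt (fun y => ρJ (t, y)) (fderiv ℝ (fun y => ρJ (t, y)) x) x := by
    have h1 : ContDiffAt ℝ 1 (fun y => ρJ (t, y)) x :=
      hρJc.comp x (contDiffAt_const.prodMk contDiffAt_id)
    exact (h1.differentiableAt one_ne_zero).hasFDerivAt
  set dρ : E3 →L[ℝ] ℝ := fderiv ℝ (fun y => ρJ (t, y)) x with hdρdef
  have hρs : HasDerivAt (fun s => ρJ (s, x)) (deriv (fun s => ρJ (s, x)) t) t := by
    have h1 : ContDiffAt ℝ 1 (fun s => ρJ (s, x)) t :=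
      by
        have h := ContDiffAt.comp (g := ρJ) (f := fun s : ℝ => ((s, x) : ℝ × E3)) t hρJc
          (contDiffAt_id.prodMk contDiffAt_const)
        exact h
    exact (h1.differentiableAt one_ne_zero).hasDerivAt
  set ρdot : ℝ := deriv (fun s => ρJ (s, x)) t with hρdotdef
  -- ## Derivatives of the normal field
  have hνt : HasFDerivAt (S.nor t) (ρ0 • Hg + dρ.smulRight g0) x := by
    have h1 := hρt.smul hGt
    have h2 : S.nor t = fun y => ρJ (t, y) • G (t, y) := funext fun y => hnorJ t y
    rw [h2]; exact h1
  set Dν : E3 →L[ℝ] E3 := ρ0 • Hg + dρ.smulRight g0 with hDνdef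
  have hDνapp : ∀ v : E3, Dν v = ρ0 • Hg v + dρ v • g0 := by
    intro v
    simp [hDνdef, ContinuousLinearMap.smulRight_apply]
  have hνs : HasDerivAt (fun s => S.nor s x) (ρ0 • gdot + ρdot • g0) t := by
    have h1 := hρs.smul hGs
    have h2 : (fun s => S.nor s x) = fun s => ρJ (s, x) • G (s, x) := funext fun s => hnorJ s x
    rw [h2]; exact h1
  set νdot : E3 := ρ0 • gdot + ρdot • g0 with hνdotdef
  -- unit-norm consequence
  have hGne : ∀ᶠ y in nhds x, G (t, y) ≠ 0 := hGt.continuousAt.eventually_ne hg0ne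
  have hone : (fun y => ⟪S.nor t y, S.nor t y⟫) =ᶠ[nhds x] fun _ => (1:ℝ) := by
    filter_upwards [hGne] with y hy
    rw [hnorJ t y, real_inner_smul_left, real_inner_smul_right,
      real_inner_self_eq_norm_mul_norm]
    have h1 : ρJ (t, y) = ‖G (t, y)‖⁻¹ := rfl
    have h2 : ‖G (t, y)‖ ≠ 0 := norm_ne_zero_iff.mpr hy
    rw [h1]; field_simp
  have hDνn : ∀ v : E3, ⟪Dν v, n⟫ = 0 := by
    have hder := hνt.inner ℝ hνt
    have hzero : HasFDerivAt (fun y => ⟪S.nor t y, S.nor t y⟫) (0 : E3 →L[ℝ] ℝ) x :=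
      (hasFDerivAt_const (1:ℝ) x).congr_of_eventuallyEq hone
    have huniq := hder.unique hzero
    intro v
    have h2 := ContinuousLinearMap.ext_iff.mp huniq v
    simp only [ContinuousLinearMap.comp_apply, ContinuousLinearMap.prod_apply,
      fderivInnerCLM_apply, ContinuousLinearMap.zero_apply, ← hndef] at h2
    have h3 := real_inner_comm (Dν v) n
    linarith [h2, h3]
  -- ## The ambient velocity field at the point
  have hwJ : ContDiff ℝ 3 (fun p : ℝ × E3 => S.w p.1 p.2) := S.w_smooth
  have hwt : HasFDerivAt (S.w t) (fderiv ℝ (S.w t) x) x := by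
    have h1 : DifferentiableAt ℝ (fun p : ℝ × E3 => S.w p.1 p.2) (t, x) :=
      (hwJ.differentiable (by norm_num)) (t, x)
    have h2 : DifferentiableAt ℝ (S.w t) x :=
      h1.comp x ((differentiableAt_const t).prodMk differentiableAt_id)
    exact h2.hasFDerivAt
  set Dw : E3 →L[ℝ] E3 := fderiv ℝ (S.w t) x with hDwdef
  set w0 : E3 := S.w t x with hw0def
  set a : ℝ := S.wN t x with hadef
  have ha : a = ⟪w0, n⟫ := rfl
  have hβ : HasFDerivAt (S.wN t) ((fderivInnerCLM ℝ (w0, n)).comp (Dw.prod Dν)) x := by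
    have h2 : S.wN t = fun y => ⟪S.w t y, S.nor t y⟫ := rfl
    rw [h2]; exact hwt.inner ℝ hνt
  set Gβ : E3 := gradient (S.wN t) x with hGβdef
  have hGβinner : ∀ v : E3, ⟪Gβ, v⟫ = ⟪w0, Dν v⟫ + ⟪Dw v, n⟫ := by
    intro v
    rw [hGβdef, gradient_inner', hβ.fderiv]
    simp [fderivInnerCLM_apply]
  -- ## The velocity field u at the point
  have huJd : Differentiable ℝ (fun p : ℝ × E3 => u p.1 p.2) := hu_smooth.differentiable (by simp)
  have hut : HasFDerivAt (u t) (fderiv ℝ (u t) x) x := by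
    have h2 : DifferentiableAt ℝ (u t) x :=
      (huJd (t, x)).comp x ((differentiableAt_const t).prodMk differentiableAt_id)
    exact h2.hasFDerivAt
  set Du : E3 →L[ℝ] E3 := fderiv ℝ (u t) x with hDudef
  set u0 : E3 := u t x with hu0def
  have hus : HasDerivAt (fun s => u s x) (deriv (fun s => u s x) t) t := by
    have h2 : DifferentiableAt ℝ (fun s => u s x) t :=
      by
        have h := DifferentiableAt.comp (g := fun p : ℝ × E3 => u p.1 p.2)
          (f := fun s : ℝ => ((s, x) : ℝ × E3)) t (huJd (t, x))
          (differentiableAt_id.prodMk (differentiableAt_const x))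
        exact h
    exact h2.hasDerivAt
  set udot : E3 := deriv (fun s => u s x) t with hudotdef
  set α0 : ℝ := ⟪n, u0⟫ with hα0def
  have hα0a : α0 = a := by
    rw [hα0def, real_inner_comm, hu0def, hndef, hadef]
    exact hu_normal t ht x hx
  have hαt : HasFDerivAt (fun y => ⟪S.nor t y, u t y⟫)
      ((fderivInnerCLM ℝ (n, u0)).comp (Dν.prod Du)) x := hνt.inner ℝ hut
  set Dα : E3 →L[ℝ] ℝ := (fderivInnerCLM ℝ (n, u0)).comp (Dν.prod Du) with hDαdef
  have hαs : HasDerivAt (fun s => ⟪S.nor s x, u s x⟫) (⟪n, udot⟫ + ⟪νdot, u0⟫) t :=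
    hνs.inner ℝ hus
  set αdot : ℝ := ⟪n, udot⟫ + ⟪νdot, u0⟫ with hαdotdef
  -- ## The tangential field uT
  set uTf : ℝ → E3 → E3 := fun s y => u s y - ⟪S.nor s y, u s y⟫ • S.nor s y with huTfdef
  have huTgoal : (fun (s : ℝ) (y : E3) => matApply (S.P s y) (u s y)) = uTf := by
    funext s y
    rw [Setting.P, matApply_proj, huTfdef]
  have huTt : HasFDerivAt (uTf t) (Du - (α0 • Dν + Dα.smulRight n)) x := by
    have h1 := hut.sub (hαt.smul hνt)
    exact h1
  set DuT : E3 →L[ℝ] E3 := Du - (α0 • Dν + Dα.smulRight n) with hDuTdef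
  have hDuTapp : ∀ v : E3, DuT v = Du v - α0 • Dν v - Dα v • n := by
    intro v
    simp [hDuTdef, ContinuousLinearMap.smulRight_apply, sub_sub]
  have huTs : HasDerivAt (fun s => uTf s x) (udot - (α0 • νdot + αdot • n)) t := by
    have h1 := hus.sub (hαs.smul hνs)
    exact h1
  -- ## The level-set identity: φ_t + w·∇φ vanishes on Γ(t)
  have hvan : ∀ y : E3, S.φ t y = 0 →
      (F' (t, y) ((1:ℝ), (0:E3)) + ⟪G (t, y), S.w t y⟫) = 0 := by
    intro y hy
    obtain ⟨y₀, hy₀, rfl⟩ := (S.φ_levelset t ht y).mpr hy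
    have hγd : ∀ s : ℝ, HasDerivAt (fun r => S.flow r y₀) (S.w s (S.flow s y₀)) s :=
      fun s => S.flow_ode y₀ s
    have hγc : Continuous fun s => S.flow s y₀ :=
      continuous_iff_continuousAt.mpr fun s => (hγd s).continuousAt
    have hcurve : ∀ s : ℝ, HasDerivAt (fun r => φJ (r, S.flow r y₀))
        (F' (s, S.flow s y₀) ((1:ℝ), S.w s (S.flow s y₀))) s := by
      intro s
      have h1 : HasDerivAt (fun r => ((r, S.flow r y₀) : ℝ × E3))
          (((1:ℝ), S.w s (S.flow s y₀)) : ℝ × E3) s :=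
        (hasDerivAt_id s).prodMk (hγd s)
      exact (hφJd (s, S.flow s y₀)).hasFDerivAt.comp_hasDerivAt s h1
    have hzero : ∀ s ∈ Icc (0:ℝ) S.T, φJ (s, S.flow s y₀) = 0 := fun s hs =>
      (S.φ_levelset s hs (S.flow s y₀)).mp ⟨y₀, hy₀, rfl⟩
    have hDcont : Continuous fun s => F' (s, S.flow s y₀) ((1:ℝ), S.w s (S.flow s y₀)) := by
      have h1 : Continuous fun s : ℝ => F' (s, S.flow s y₀) :=
        hF'1.continuous.comp (continuous_id.prodMk hγc)
      have h2 : Continuous fun s : ℝ => (((1:ℝ), S.w s (S.flow s y₀)) : ℝ × E3) :=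
        continuous_const.prodMk (hwJ.continuous.comp (continuous_id.prodMk hγc))
      exact h1.clm_apply h2
    have hIoo : ∀ s ∈ Ioo (0:ℝ) S.T,
        F' (s, S.flow s y₀) ((1:ℝ), S.w s (S.flow s y₀)) = 0 := by
      intro s hs
      have hev : (fun r => φJ (r, S.flow r y₀)) =ᶠ[nhds s] fun _ => (0:ℝ) := by
        filter_upwards [Ioo_mem_nhds hs.1 hs.2] with r hr
        exact hzero r (Ioo_subset_Icc_self hr)
      have h0 : HasDerivAt (fun r => φJ (r, S.flow r y₀)) 0 s :=
        (hasDerivAt_const s (0:ℝ)).congr_of_eventuallyEq hev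
      exact (hcurve s).unique h0
    have hsub : Icc (0:ℝ) S.T ⊆
        {s : ℝ | F' (s, S.flow s y₀) ((1:ℝ), S.w s (S.flow s y₀)) = 0} := by
      rw [← closure_Ioo S.T_pos.ne]
      exact (isClosed_eq hDcont continuous_const).closure_subset_iff.mpr
        fun s hs => hIoo s hs
    have hDt : F' (t, S.flow t y₀) ((1:ℝ), S.w t (S.flow t y₀)) = 0 := hsub ht
    rw [hGinner]
    have hsplit : (((1:ℝ), (0:E3)) : ℝ × E3) + (((0:ℝ), S.w t (S.flow t y₀)) : ℝ × E3)
        = (((1:ℝ), S.w t (S.flow t y₀)) : ℝ × E3) := by simp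
    rw [← ContinuousLinearMap.map_add, hsplit, hDt]
  -- ## Tangential gradient of the level-set identity
  have hψt : HasFDerivAt (fun y => F' (t, y) ((1:ℝ), (0:E3)))
      ((ContinuousLinearMap.apply ℝ ℝ (((1:ℝ), (0:E3)) : ℝ × E3)).comp (F''.comp inr3)) x := by
    have h1 : HasFDerivAt (fun y : E3 => F' (t, y)) (F''.comp inr3) x :=
      (hF'd (t, x)).hasFDerivAt.comp x (hinr t x)
    exact ((ContinuousLinearMap.apply ℝ ℝ (((1:ℝ), (0:E3)) : ℝ × E3)).hasFDerivAt).comp x h1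
  have hwG : HasFDerivAt (fun y => ⟪G (t, y), S.w t y⟫)
      ((fderivInnerCLM ℝ (g0, w0)).comp (Hg.prod Dw)) x := hGt.inner ℝ hwt
  have hhd : HasFDerivAt (fun y => F' (t, y) ((1:ℝ), (0:E3)) + ⟪G (t, y), S.w t y⟫)
      (((ContinuousLinearMap.apply ℝ ℝ (((1:ℝ), (0:E3)) : ℝ × E3)).comp (F''.comp inr3))
        + ((fderivInnerCLM ℝ (g0, w0)).comp (Hg.prod Dw))) x := hψt.add hwG
  have hfderivφ : fderiv ℝ (S.φ t) x = (F' (t, x)).comp inr3 := (hφs t x).fderiv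
  have hφfderiv_app : ∀ v : E3, fderiv ℝ (S.φ t) x v = ⟪g0, v⟫ := by
    intro v
    rw [hfderivφ]
    have h1 : ((F' (t, x)).comp inr3) v = F' (t, x) ((0:ℝ), v) := by
      simp [hinr3def]
    rw [h1, ← hGinner (t, x) v, hg0def]
  have hφgradne : fderiv ℝ (S.φ t) x ≠ 0 := by
    intro hc
    apply hg0ne
    rw [← inner_self_eq_zero (𝕜 := ℝ)]
    rw [← hφfderiv_app g0, hc]
    simp
  have hφc1 : ContDiffAt ℝ 1 (S.φ t) x := by
    have h1 : ContDiffAt ℝ 1 φJ (t, x) := (hφJ.of_le (by norm_num)).contDiffAt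
    exact h1.comp x (contDiffAt_const.prodMk contDiffAt_id)
  have hkey0 := fderiv_vanish_on_levelset hφc1 hφ0 hφgradne hhd.differentiableAt hvan
  have hkey : ∀ v : E3, ⟪g0, v⟫ = 0 →
      ⟪gdot, v⟫ + (⟪g0, Dw v⟫ + ⟪Hg v, w0⟫) = 0 := by
    intro v hv
    have h1 : fderiv ℝ (S.φ t) x v = 0 := by rw [hφfderiv_app v]; exact hv
    have h2 := hkey0 v h1
    rw [hhd.fderiv] at h2
    simp only [ContinuousLinearMap.add_apply, ContinuousLinearMap.comp_apply,
      ContinuousLinearMap.apply_apply, fderivInnerCLM_apply,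
      ContinuousLinearMap.prod_apply] at h2
    have h3 : F'' (inr3 v) (((1:ℝ), (0:E3)) : ℝ × E3) = ⟪gdot, v⟫ := by
      have h4 : inr3 v = (((0:ℝ), v) : ℝ × E3) := by simp [hinr3def]
      rw [h4, hsym, ← hgdotinner v]
    rw [h3] at h2
    linarith [h2]
  -- ## Solving for the derivative of the normalization factor
  have hdρ : ∀ v : E3, dρ v * ⟪g0, g0⟫ = -(ρ0 * ⟪Hg v, g0⟫) := by
    intro v
    have h1 := hDνn v
    rw [hDνapp v, hn, inner_add_left, real_inner_smul_left, real_inner_smul_left,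
      real_inner_smul_right, real_inner_smul_right] at h1
    have h2 : ρ0 * (ρ0 * ⟪Hg v, g0⟫ + dρ v * ⟪g0, g0⟫) = 0 := by
      ring_nf; ring_nf at h1; linarith
    rcases mul_eq_zero.mp h2 with h | h
    · exact absurd h hρ0ne
    · linarith
  have hggne : ⟪g0, g0⟫ ≠ (0:ℝ) := by
    intro h; rw [h] at hρg; simp at hρg
  have hdρ3 : ∀ v : E3, dρ v = -(ρ0 * ρ0 * ρ0 * ⟪Hg v, g0⟫) := by
    intro v
    calc dρ v = dρ v * (ρ0 * ρ0 * ⟪g0, g0⟫) := by rw [hρg]; ring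
      _ = (dρ v * ⟪g0, g0⟫) * (ρ0 * ρ0) := by ring
      _ = -(ρ0 * ⟪Hg v, g0⟫) * (ρ0 * ρ0) := by rw [hdρ v]
      _ = -(ρ0 * ρ0 * ρ0 * ⟪Hg v, g0⟫) := by ring
  have hw0g0 : ρ0 * ⟪w0, g0⟫ = a := by
    rw [ha, hn, real_inner_smul_right]
  -- ## The key scalar identity in tangential directions
  have hsc : ∀ v : E3, ⟪g0, v⟫ = 0 → ⟪νdot + a • Dν n + Gβ, v⟫ = 0 := by
    intro v hv
    have hkv := hkey v hv
    have h1 : ⟪νdot, v⟫ = ρ0 * ⟪gdot, v⟫ := by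
      rw [hνdotdef, inner_add_left, real_inner_smul_left, real_inner_smul_left, hv]; ring
    have h2 : ⟪Dν n, v⟫ = ρ0 * (ρ0 * ⟪Hg g0, v⟫) := by
      rw [hDνapp n]
      rw [show Hg n = ρ0 • Hg g0 by rw [hn]; simp]
      rw [inner_add_left, real_inner_smul_left, real_inner_smul_left,
        real_inner_smul_left, hv]
      ring
    have h3 : ⟪Gβ, v⟫ = ρ0 * ⟪w0, Hg v⟫ + dρ v * ⟪w0, g0⟫ + ρ0 * ⟪Dw v, g0⟫ := by
      rw [hGβinner v, hDνapp v, hn, inner_add_right, real_inner_smul_right,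
        real_inner_smul_right, real_inner_smul_right]
    rw [inner_add_left, inner_add_left, real_inner_smul_left, h1, h2, h3]
    rw [show ⟪Hg g0, v⟫ = ⟪Hg v, g0⟫ from hHgsym g0 v]
    rw [show ⟪w0, Hg v⟫ = ⟪Hg v, w0⟫ from real_inner_comm _ _]
    rw [show ⟪Dw v, g0⟫ = ⟪g0, Dw v⟫ from real_inner_comm _ _]
    rw [← hw0g0, hdρ3 v]
    linear_combination ρ0 * hkv
  -- ## The geometric identity  P∂°n + ∇_Γ w_N = 0
  set B : E3 := νdot + a • Dν n + Gβ with hBdef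
  have hbp : B - ⟪n, B⟫ • n = 0 := by
    have hnb : ⟪n, B - ⟪n, B⟫ • n⟫ = 0 := by
      rw [inner_sub_right, real_inner_smul_right, hnn]; ring
    have hgb : ⟪g0, B - ⟪n, B⟫ • n⟫ = 0 := by
      have h1 : ρ0 * ⟪g0, B - ⟪n, B⟫ • n⟫ = 0 := by
        rw [← real_inner_smul_left, ← hn]; exact hnb
      rcases mul_eq_zero.mp h1 with h | h
      · exact absurd h hρ0ne
      · exact h
    have hBb := hsc _ hgb
    have hbb : ⟪B - ⟪n, B⟫ • n, B - ⟪n, B⟫ • n⟫ = (0:ℝ) := by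
      rw [inner_sub_left, real_inner_smul_left, hBb, hnb]; ring
    exact inner_self_eq_zero.mp hbb
  -- ## Rewriting the goal
  have eP : ∀ z : E3, matApply (S.P t x) z = z - ⟪n, z⟫ • n := by
    intro z
    simp only [Setting.P]
    rw [← hndef, matApply_proj]
  have huTfx : uTf t x = u0 - α0 • n := by
    show u t x - ⟪S.nor t x, u t x⟫ • S.nor t x = u0 - α0 • n
    rw [← hndef, ← hu0def, ← hα0def]
  have hPuT : matApply (S.P t x) (uTf t x) = u0 - α0 • n := by
    rw [eP, huTfx, inner_sub_right, real_inner_smul_right, hnn, ← hα0def]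
    simp
  have e1 : materialDeriv u u t x = udot + Du u0 := by
    simp only [materialDeriv]
    rw [matApply_jac, ← hudotdef, ← hDudef, ← hu0def]
  have e2 : S.ndt uTf t x = udot - (α0 • νdot + αdot • n) + a • DuT n := by
    simp only [Setting.ndt]
    rw [huTs.deriv, matApply_jac, huTt.fderiv, ← hadef, ← hndef,
      ContinuousLinearMap.map_smul]
  have e3 : matApply (S.covGrad t (uTf t) x) (uTf t x)
      = DuT (u0 - α0 • n) - ⟪n, DuT (u0 - α0 • n)⟫ • n := by
    simp only [Setting.covGrad]
    rw [matApply_mul, matApply_mul, hPuT, matApply_jac, huTt.fderiv, eP]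
  have e4 : matApply (S.Wein t x) (uTf t x)
      = Dν (u0 - α0 • n) - ⟪n, Dν (u0 - α0 • n)⟫ • n := by
    simp only [Setting.Wein, Setting.covGrad]
    rw [matApply_mul, matApply_mul, hPuT, matApply_jac,
      show fderiv ℝ (S.nor t) x = Dν from hνt.fderiv, eP]
  have hsqfun : (fun y => S.wN t y ^ 2) = fun y => S.wN t y * S.wN t y := by
    funext y; ring
  have hgsq : gradient (fun y => S.wN t y ^ 2) x = a • Gβ + a • Gβ := by
    rw [hsqfun]
    have hsq := hβ.mul hβ
    rw [gradient, (show HasFDerivAt (fun y => S.wN t y * S.wN t y) _ x from hsq).fderiv, map_add, LinearIsometryEquiv.map_smul]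
    have h1 : Gβ = (InnerProductSpace.toDual ℝ E3).symm
        ((fderivInnerCLM ℝ (w0, n)).comp (Dw.prod Dν)) := by
      rw [hGβdef, gradient, hβ.fderiv]
    rw [← h1, ← hadef]
  have e5 : S.sgrad t (fun y => S.wN t y ^ 2) x
      = (a • Gβ + a • Gβ) - ⟪n, a • Gβ + a • Gβ⟫ • n := by
    simp only [Setting.sgrad]
    rw [eP, hgsq]
  have hDuu0 : Du u0 = Du (u0 - α0 • n) + α0 • Du n := by
    rw [ContinuousLinearMap.map_sub, ContinuousLinearMap.map_smul]
    abel
  have hc : B = ⟪n, B⟫ • n := sub_eq_zero.mp hbp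
  have hGβeq : Gβ = ⟪n, B⟫ • n - νdot - a • Dν n := by
    calc Gβ = B - νdot - a • Dν n := by rw [hBdef]; abel
      _ = ⟪n, B⟫ • n - νdot - a • Dν n := by rw [← hc]
  -- ## Final assembly
  rw [huTgoal, e1, e2, e3, e5, eP, eP]
  rw [show matApply (S.Wein t x) (uTf t x)
      = Dν (u0 - α0 • n) - ⟪n, Dν (u0 - α0 • n)⟫ • n from e4]
  rw [hDuu0, hGβeq]
  simp only [hDuTapp, hα0a]
  simp only [inner_add_right, inner_sub_right, real_inner_smul_right, hnn,
    mul_one]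
  module
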